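/- arXiv:1901.10763 — 6 statements merged into one kernel-verified Lean document; each statement's English description precedes it below -/
import Mathlib

section
/- Let N ≥ 1, let C ⊂ ℝ^N be a compact set, and let D : ℝ^N → ℝ be continuous. Suppose D attains its minimum over C at a unique point a* ∈ C, and that a* belongs to the interior of C. For T > 0 define the Gibbs probability measure P_T on ℝ^N by P_T(B) = ∫_{B ∩ C} exp(−D(a)/T) da / ∫_C exp(−D(a)/T) da for measurable B. Then for every open set U ⊆ ℝ^N containing a*, P_T(U) → 1 as T → 0⁺. -/
/-!
The Gibbs weight `exp (-D/T)` of the part of `C` outside `U` is at most `μ(C \ U) · exp (-m₁/T)`,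
where `m₁ = min_{C \ U} D`, while the total weight is at least `μ(V) · exp (-m₂/T)` for an open
neighbourhood `V ⊆ C` of the minimiser on which `D < m₂`. Since the minimiser is unique and
`C \ U` is compact, one can take `m₂ < m₁`, so the relative weight of `C \ U` is
`O(exp (-(m₁ - m₂)/T))`, which tends to `0` as `T → 0⁺`.
-/

open Real Filter Topology MeasureTheory Set
open scoped ENNReal

theorem tendsto_exp_neg_div_nhdsGT_zero {c : ℝ} (hc : 0 < c) :
    Tendsto (fun T => exp (-(c / T))) (𝓝[>] 0) (𝓝 0) :=
  tendsto_exp_atBot.comp <| tendsto_neg_atTop_atBot.comp <|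
    (tendsto_inv_nhdsGT_zero.const_mul_atTop hc).congr fun T => (div_eq_mul_inv c T).symm

section GibbsWeight

variable {X : Type*} [MeasurableSpace X] {μ : Measure X} {D : X → ℝ} {T : ℝ}

theorem setIntegral_exp_pos {f : X → ℝ} {s : Set X}
    (hf : IntegrableOn (fun x => exp (f x)) s μ) (hs : μ s ≠ 0) :
    0 < ∫ x in s, exp (f x) ∂μ :=
  have : NeZero (μ.restrict s) := ⟨by rwa [Ne, Measure.restrict_eq_zero]⟩
  integral_exp_pos hf

theorem setIntegral_inter_div_eq_one_sub {f : X → ℝ} {C U : Set X} (hU : MeasurableSet U)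
    (hf : IntegrableOn f C μ) (hC : ∫ x in C, f x ∂μ ≠ 0) :
    (∫ x in U ∩ C, f x ∂μ) / ∫ x in C, f x ∂μ = 1 - (∫ x in C \ U, f x ∂μ) / ∫ x in C, f x ∂μ := by
  rw [eq_sub_iff_add_eq, ← add_div, inter_comm, integral_inter_add_sdiff hU hf, div_self hC]

theorem setIntegral_exp_neg_div_le {s : Set X} {m : ℝ} (hT : 0 ≤ T) (hs : μ s < ∞)
    (hm : ∀ x ∈ s, m ≤ D x) :
    ∫ x in s, exp (-(D x / T)) ∂μ ≤ exp (-(m / T)) * μ.real s := by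
  refine (le_norm_self _).trans (norm_setIntegral_le_of_norm_le_const hs fun x hx => ?_)
  rw [norm_of_nonneg (exp_pos _).le, exp_le_exp, neg_le_neg_iff]
  exact div_le_div_of_nonneg_right (hm x hx) hT

theorem exp_neg_div_mul_le_setIntegral {s : Set X} {m : ℝ} (hT : 0 ≤ T) (hs : MeasurableSet s)
    (hμs : μ s ≠ ∞) (hf : IntegrableOn (fun x => exp (-(D x / T))) s μ)
    (hm : ∀ x ∈ s, D x ≤ m) :
    exp (-(m / T)) * μ.real s ≤ ∫ x in s, exp (-(D x / T)) ∂μ :=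
  setIntegral_ge_of_const_le_real hs hμs
    (fun x hx => exp_le_exp.2 <| neg_le_neg <| div_le_div_of_nonneg_right (hm x hx) hT) hf

theorem setIntegral_exp_neg_div_div_le {K C V : Set X} {m₁ m₂ : ℝ} (hT : 0 ≤ T)
    (hK : μ K < ∞) (hKD : ∀ x ∈ K, m₁ ≤ D x) (hC : IntegrableOn (fun x => exp (-(D x / T))) C μ)
    (hV : MeasurableSet V) (hVC : V ⊆ C) (hV₀ : μ V ≠ 0) (hV₁ : μ V ≠ ∞)
    (hVD : ∀ x ∈ V, D x ≤ m₂) :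
    (∫ x in K, exp (-(D x / T)) ∂μ) / ∫ x in C, exp (-(D x / T)) ∂μ ≤
      μ.real K / μ.real V * exp (-((m₁ - m₂) / T)) := by
  have hμV : 0 < μ.real V := ENNReal.toReal_pos hV₀ hV₁
  have hlow : exp (-(m₂ / T)) * μ.real V ≤ ∫ x in C, exp (-(D x / T)) ∂μ :=
    (exp_neg_div_mul_le_setIntegral hT hV hV₁ (hC.mono_set hVC) hVD).trans
      (setIntegral_mono_set hC (ae_of_all _ fun _ => (exp_pos _).le) hVC.eventuallyLE)
  calc _ ≤ exp (-(m₁ / T)) * μ.real K / (exp (-(m₂ / T)) * μ.real V) :=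
        div_le_div₀ (by positivity) (setIntegral_exp_neg_div_le hT hK hKD) (by positivity) hlow
    _ = _ := by
        rw [show exp (-((m₁ - m₂) / T)) = exp (-(m₁ / T)) / exp (-(m₂ / T)) by
          rw [← exp_sub]; ring_nf]
        field_simp

variable [TopologicalSpace X] [T2Space X] [OpensMeasurableSpace X] [IsFiniteMeasureOnCompacts μ]
  {C : Set X}

theorem integrableOn_exp_neg_div (hC : IsCompact C) (hD : ContinuousOn D C) (T : ℝ) :
    IntegrableOn (fun x => exp (-(D x / T))) C μ :=
  ((hD.div_const T).neg.rexp).integrableOn_compact hC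

theorem tendsto_setIntegral_exp_neg_div_sdiff_div [μ.IsOpenPosMeasure] (hC : IsCompact C)
    (hD : ContinuousOn D C) {a : X} (ha : a ∈ interior C) (hmin : ∀ x ∈ C, D a ≤ D x)
    (huniq : ∀ x ∈ C, D x = D a → x = a) {U : Set X} (hU : IsOpen U) (haU : a ∈ U) :
    Tendsto (fun T => (∫ x in C \ U, exp (-(D x / T)) ∂μ) / ∫ x in C, exp (-(D x / T)) ∂μ)
      (𝓝[>] 0) (𝓝 0) := by
  rcases (C \ U).eq_empty_or_nonempty with hK | hK
  · simp [hK]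
  obtain ⟨x₀, hx₀, hx₀min⟩ := (hC.diff hU).exists_isMinOn hK (hD.mono sdiff_subset)
  have hgap : D a < D x₀ :=
    (hmin x₀ hx₀.1).lt_of_ne fun h => hx₀.2 (huniq x₀ hx₀.1 h.symm ▸ haU)
  obtain ⟨m, ham, hmx₀⟩ := exists_between hgap
  set V := interior C ∩ D ⁻¹' Iio m
  have hVopen : IsOpen V :=
    (hD.mono interior_subset).isOpen_inter_preimage isOpen_interior isOpen_Iio
  have hVC : V ⊆ C := inter_subset_left.trans interior_subset
  have hV₀ : μ V ≠ 0 := hVopen.measure_ne_zero μ ⟨a, ha, ham⟩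
  have hbound : ∀ T ∈ Ioi (0 : ℝ), (∫ x in C \ U, exp (-(D x / T)) ∂μ) /
      ∫ x in C, exp (-(D x / T)) ∂μ ≤ μ.real (C \ U) / μ.real V * exp (-((D x₀ - m) / T)) :=
    fun T hT => setIntegral_exp_neg_div_div_le (le_of_lt hT)
      ((measure_mono sdiff_subset).trans_lt hC.measure_lt_top) (fun x hx => hx₀min hx)
      (integrableOn_exp_neg_div hC hD T) hVopen.measurableSet hVC hV₀
      (measure_mono hVC |>.trans_lt hC.measure_lt_top).ne fun x hx => (mem_Iio.1 hx.2).le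
  refine squeeze_zero' (Eventually.of_forall fun T => div_nonneg
      (integral_nonneg fun _ => (exp_pos _).le) (integral_nonneg fun _ => (exp_pos _).le))
    (eventually_nhdsWithin_of_forall hbound) ?_
  simpa using (tendsto_exp_neg_div_nhdsGT_zero (sub_pos.2 hmx₀)).const_mul
    (μ.real (C \ U) / μ.real V)

end GibbsWeight

theorem stmt3_general (N : ℕ)
    (C : Set (EuclideanSpace ℝ (Fin N))) (hC : IsCompact C)
    (D : EuclideanSpace ℝ (Fin N) → ℝ) (hD : Continuous D)
    (astar : EuclideanSpace ℝ (Fin N))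
    (hmin : ∀ a ∈ C, D astar ≤ D a)
    (huniq : ∀ a ∈ C, D a = D astar → a = astar)
    (hint : astar ∈ interior C)
    (U : Set (EuclideanSpace ℝ (Fin N))) (hU : IsOpen U) (haU : astar ∈ U) :
    Filter.Tendsto
      (fun T : ℝ =>
        (∫ a in U ∩ C, Real.exp (-(D a / T))) / ∫ a in C, Real.exp (-(D a / T)))
      (𝓝[>] (0 : ℝ)) (𝓝 1) := by
  have hμC : volume C ≠ 0 :=
    (isOpen_interior.measure_ne_zero volume ⟨astar, hint⟩ <| measure_mono_null interior_subset ·)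
  have hsplit := fun T => setIntegral_inter_div_eq_one_sub hU.measurableSet
    (integrableOn_exp_neg_div hC hD.continuousOn T)
    (setIntegral_exp_pos (integrableOn_exp_neg_div hC hD.continuousOn T) hμC).ne'
  simp only [hsplit]
  simpa using (tendsto_setIntegral_exp_neg_div_sdiff_div hC hD.continuousOn hint hmin huniq hU
    haU).const_sub 1

theorem stmt3 (N : ℕ) (hN : 1 ≤ N)
    (C : Set (EuclideanSpace ℝ (Fin N))) (hC : IsCompact C)
    (D : EuclideanSpace ℝ (Fin N) → ℝ) (hD : Continuous D)
    (astar : EuclideanSpace ℝ (Fin N)) (hastar : astar ∈ C)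
    (hmin : ∀ a ∈ C, D astar ≤ D a)
    (huniq : ∀ a ∈ C, D a = D astar → a = astar)
    (hint : astar ∈ interior C)
    (U : Set (EuclideanSpace ℝ (Fin N))) (hU : IsOpen U) (haU : astar ∈ U) :
    Filter.Tendsto
      (fun T : ℝ =>
        (∫ a in U ∩ C, Real.exp (-(D a / T))) / ∫ a in C, Real.exp (-(D a / T)))
      (𝓝[>] (0 : ℝ)) (𝓝 1) :=
  stmt3_general N C hC D hD astar hmin huniq hint U hU haU
end

section
/- Let N ≥ 1, let p ≥ 2 be an even integer, let c¹, …, c^{n_c} ∈ ℝ^N be control points, and let w ∈ ℝ^{n_c} be a weight vector. Define D^mps(a) = ∑_{i=1}^{n_c} w_i ‖a − c^i‖^p log ‖a − c^i‖ (each term taken to be 0 when a = c^i), where ‖·‖ is the Euclidean norm on ℝ^N and log is the natural logarithm. Then D^mps(a)/(‖a‖^p log ‖a‖) → ∑_{i=1}^{n_c} w_i as ‖a‖ → +∞. -/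
open Real Filter Topology Asymptotics

/-!
Each kernel term is asymptotically equivalent to the one centred at the origin: since
`|‖a - c‖ - ‖a‖| ≤ ‖c‖`, we have `‖a - c‖ ~ ‖a‖`, and asymptotic equivalence is preserved by
powers and, for functions tending to `+∞`, by `log`. Dividing by `‖a‖ ^ p * log ‖a‖` turns each
term of the spline into `w i` plus a vanishing error.
-/

section

variable {E : Type*} [SeminormedAddCommGroup E]

lemma isEquivalent_norm_sub_const (c : E) :
    (fun a : E => ‖a - c‖) ~[comap norm atTop] fun a => ‖a‖ := by
  have hbounded : (fun a : E => ‖a - c‖ - ‖a‖) =O[comap norm atTop] fun _ => (1 : ℝ) :=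
    IsBigO.of_bound ‖c‖ <| Eventually.of_forall fun a => by
      rw [norm_one, mul_one, Real.norm_eq_abs]
      exact (abs_norm_sub_norm_le (a - c) a).trans_eq (by rw [sub_sub_cancel_left, norm_neg])
  exact hbounded.trans_isLittleO <|
    (isLittleO_one_left_iff ℝ).2 (tendsto_norm_atTop_atTop.comp tendsto_comap)

lemma isEquivalent_pow_mul_log_norm_sub_const (p : ℕ) (c : E) :
    (fun a : E => ‖a - c‖ ^ p * log ‖a - c‖) ~[comap norm atTop]
      fun a => ‖a‖ ^ p * log ‖a‖ :=
  ((isEquivalent_norm_sub_const c).pow p).mul ((isEquivalent_norm_sub_const c).log tendsto_comap)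

end

lemma tendsto_sum_mul_div_of_isEquivalent {α ι : Type*} {l : Filter α} (s : Finset ι)
    (w : ι → ℝ) {f : ι → α → ℝ} {g : α → ℝ} (hf : ∀ i ∈ s, f i ~[l] g)
    (hg : ∀ᶠ x in l, g x ≠ 0) :
    Tendsto (fun x => (∑ i ∈ s, w i * f i x) / g x) l (𝓝 (∑ i ∈ s, w i)) := by
  simp_rw [Finset.sum_div, mul_div_assoc]
  simpa using tendsto_finsetSum s fun i hi =>
    ((isEquivalent_iff_tendsto_one hg).1 (hf i hi)).const_mul (w i)

theorem stmt5_general (N : ℕ) (p : ℕ)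
    (nc : ℕ) (c : Fin nc → EuclideanSpace ℝ (Fin N)) (w : Fin nc → ℝ) :
    Filter.Tendsto
      (fun a : EuclideanSpace ℝ (Fin N) =>
        (∑ i, w i * (‖a - c i‖ ^ p * Real.log ‖a - c i‖)) / (‖a‖ ^ p * Real.log ‖a‖))
      (Filter.comap (fun a : EuclideanSpace ℝ (Fin N) => ‖a‖) Filter.atTop)
      (𝓝 (∑ i, w i)) := by
  have hdenom : ∀ᶠ a : EuclideanSpace ℝ (Fin N) in comap norm atTop,
      ‖a‖ ^ p * log ‖a‖ ≠ 0 := by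
    filter_upwards [tendsto_comap.eventually_gt_atTop 1] with a ha
    exact mul_ne_zero (pow_ne_zero _ (by linarith)) (log_pos ha).ne'
  exact tendsto_sum_mul_div_of_isEquivalent Finset.univ w
    (fun i _ => isEquivalent_pow_mul_log_norm_sub_const p (c i)) hdenom

theorem stmt5 (N : ℕ) (hN : 1 ≤ N) (p : ℕ) (heven : Even p) (hp2 : 2 ≤ p)
    (nc : ℕ) (c : Fin nc → EuclideanSpace ℝ (Fin N)) (w : Fin nc → ℝ) :
    Filter.Tendsto
      (fun a : EuclideanSpace ℝ (Fin N) =>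
        (∑ i, w i * (‖a - c i‖ ^ p * Real.log ‖a - c i‖)) / (‖a‖ ^ p * Real.log ‖a‖))
      (Filter.comap (fun a : EuclideanSpace ℝ (Fin N) => ‖a‖) Filter.atTop)
      (𝓝 (∑ i, w i)) :=
  stmt5_general N p nc c w
end

section
/- Let N ≥ 1, let p ≥ 1 be an odd integer, let c¹, …, c^{n_c} ∈ ℝ^N be control points, and let w ∈ ℝ^{n_c} satisfy ∑_{i=1}^{n_c} w_i > 0. Define D^mps(a) = ∑_{i=1}^{n_c} w_i ‖a − c^i‖^p, where ‖·‖ is the Euclidean norm. Then D^mps(a) → +∞ as ‖a‖ → +∞; that is, inf_{‖a‖ > R} D^mps(a) → +∞ as R → +∞. -/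
open Filter Asymptotics

/- Far from the origin every ‖a - cᵢ‖ is equivalent to ‖a‖, hence the weighted sum is equivalent to
(∑ᵢ wᵢ) ‖a‖ ^ p, which tends to +∞ because the total weight is positive and p ≥ 1. -/

theorem isEquivalent_norm_sub_norm {E : Type*} [SeminormedAddCommGroup E] (c : E) :
    (fun a : E => ‖a - c‖) ~[comap norm atTop] fun a => ‖a‖ := by
  have hbounded : (fun a : E => ‖a - c‖ - ‖a‖) =O[comap norm atTop] fun _ => (1 : ℝ) :=
    IsBigO.of_bound ‖c‖ <| Eventually.of_forall fun a => by
      rw [norm_one, mul_one, Real.norm_eq_abs, abs_sub_comm]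
      exact (abs_norm_sub_norm_le a (a - c)).trans_eq (by rw [sub_sub_cancel])
  have hnorm : Tendsto (fun a : E => ‖‖a‖‖) (comap norm atTop) atTop := by
    simpa only [norm_norm] using tendsto_comap
  exact hbounded.trans_isLittleO ((isLittleO_one_left_iff ℝ).mpr hnorm)

theorem isEquivalent_weighted_sum {α ι 𝕜 : Type*} [NormedField 𝕜] {l : Filter α}
    {s : Finset ι} {u : ι → α → 𝕜} {v : α → 𝕜} (w : ι → 𝕜) (hw : ∑ i ∈ s, w i ≠ 0)
    (huv : ∀ i ∈ s, u i ~[l] v) :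
    (fun x => ∑ i ∈ s, w i * u i x) ~[l] fun x => (∑ i ∈ s, w i) * v x := by
  have hsum : (fun x => ∑ i ∈ s, w i * (u i x - v x)) =o[l] v :=
    IsLittleO.fun_sum fun i hi => (huv i hi).isLittleO.const_mul_left (w i)
  refine (hsum.trans_isBigO (isBigO_self_const_mul hw v l)).congr_left fun x => ?_
  simp only [Pi.sub_apply, mul_sub, Finset.sum_sub_distrib, Finset.sum_mul]

theorem stmt6_general (N : ℕ) (p : ℕ) (hp1 : 1 ≤ p)
    (nc : ℕ) (c : Fin nc → EuclideanSpace ℝ (Fin N)) (w : Fin nc → ℝ)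
    (hw : 0 < ∑ i, w i) :
    Filter.Tendsto
      (fun a : EuclideanSpace ℝ (Fin N) => ∑ i, w i * ‖a - c i‖ ^ p)
      (Filter.comap (fun a : EuclideanSpace ℝ (Fin N) => ‖a‖) Filter.atTop)
      Filter.atTop := by
  have hequiv := isEquivalent_weighted_sum (s := Finset.univ) w hw.ne'
    fun i _ => (isEquivalent_norm_sub_norm (c i)).pow p
  have hleading : Tendsto (fun a : EuclideanSpace ℝ (Fin N) => (∑ i, w i) * ‖a‖ ^ p)
      (comap norm atTop) atTop :=
    ((tendsto_pow_atTop (by omega)).comp tendsto_comap).const_mul_atTop hw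
  exact hequiv.symm.tendsto_atTop hleading

theorem stmt6 (N : ℕ) (hN : 1 ≤ N) (p : ℕ) (hodd : Odd p) (hp1 : 1 ≤ p)
    (nc : ℕ) (c : Fin nc → EuclideanSpace ℝ (Fin N)) (w : Fin nc → ℝ)
    (hw : 0 < ∑ i, w i) :
    Filter.Tendsto
      (fun a : EuclideanSpace ℝ (Fin N) => ∑ i, w i * ‖a - c i‖ ^ p)
      (Filter.comap (fun a : EuclideanSpace ℝ (Fin N) => ‖a‖) Filter.atTop)
      Filter.atTop :=
  stmt6_general N p hp1 nc c w hw
end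

section
/- Let N ≥ 1, let p ≥ 1 be an odd integer, let c¹, …, c^{n_c} ∈ ℝ^N be control points, and let w ∈ ℝ^{n_c} satisfy ∑_{i=1}^{n_c} w_i > 0. Define D^mps(a) = ∑_{i=1}^{n_c} w_i ‖a − c^i‖^p, where ‖·‖ is the Euclidean norm. Then D^mps is bounded below on ℝ^N and attains its global minimum: there exists a* ∈ ℝ^N with D^mps(a*) ≤ D^mps(a) for all a ∈ ℝ^N; in particular inf_{a ∈ ℝ^N} D^mps(a) is a (finite) real number. -/
/-!
Each `‖a - cᵢ‖` differs from `‖a‖` by at most `‖cᵢ‖`, so `‖a - cᵢ‖ ^ p ~ ‖a‖ ^ p` as `a → ∞` and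
the spline is asymptotically equivalent to `(∑ i, w i) * ‖a‖ ^ p`. For `∑ i, w i > 0` and `p ≥ 1`
it is therefore coercive, and a continuous coercive function on a proper space attains its minimum.
-/

open Filter Asymptotics Bornology

section NormSubPow

variable {E : Type*} [NormedAddCommGroup E]

theorem isEquivalent_norm_sub_cobounded (c : E) :
    (fun a : E => ‖a - c‖) ~[cobounded E] fun a => ‖a‖ := by
  have hbdd : (fun a : E => ‖a - c‖ - ‖a‖) =O[cobounded E] fun _ => (1 : ℝ) :=
    .of_bound ‖c‖ <| .of_forall fun a => by
      simpa [abs_sub_comm] using abs_norm_sub_norm_le (a - c) a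
  have hone : (fun _ : E => (1 : ℝ)) =o[cobounded E] fun a => ‖a‖ :=
    isLittleO_const_left.2 <| .inr <| tendsto_norm_atTop_atTop.comp tendsto_norm_cobounded_atTop
  exact hbdd.trans_isLittleO hone

theorem isEquivalent_sum_mul_norm_sub_pow_cobounded {ι : Type*} (s : Finset ι) (c : ι → E)
    (w : ι → ℝ) (hw : ∑ i ∈ s, w i ≠ 0) (p : ℕ) :
    (fun a : E => ∑ i ∈ s, w i * ‖a - c i‖ ^ p) ~[cobounded E]
      fun a => (∑ i ∈ s, w i) * ‖a‖ ^ p := by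
  have hterm : ∀ i ∈ s, (fun a : E => w i * (‖a - c i‖ ^ p - ‖a‖ ^ p)) =o[cobounded E]
      fun a => (∑ i ∈ s, w i) * ‖a‖ ^ p := fun i _ =>
    (((isEquivalent_norm_sub_cobounded (c i)).pow p).isLittleO.const_mul_left (w i)).trans_isBigO
      (isBigO_self_const_mul hw _ _)
  refine IsLittleO.isEquivalent ((IsLittleO.sum hterm).congr_left fun a => ?_)
  simp [mul_sub, Finset.sum_mul, Finset.sum_sub_distrib]

theorem tendsto_sum_mul_norm_sub_pow_cobounded {ι : Type*} (s : Finset ι) (c : ι → E)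
    (w : ι → ℝ) (hw : 0 < ∑ i ∈ s, w i) {p : ℕ} (hp : p ≠ 0) :
    Tendsto (fun a : E => ∑ i ∈ s, w i * ‖a - c i‖ ^ p) (cobounded E) atTop :=
  (isEquivalent_sum_mul_norm_sub_pow_cobounded s c w hw.ne' p).symm.tendsto_atTop <|
    ((tendsto_pow_atTop hp).comp tendsto_norm_cobounded_atTop).const_mul_atTop hw

theorem exists_forall_sum_mul_norm_sub_pow_le [ProperSpace E] {ι : Type*} (s : Finset ι)
    (c : ι → E) (w : ι → ℝ) (hw : 0 < ∑ i ∈ s, w i) {p : ℕ} (hp : p ≠ 0) :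
    ∃ a₀ : E, ∀ a, ∑ i ∈ s, w i * ‖a₀ - c i‖ ^ p ≤ ∑ i ∈ s, w i * ‖a - c i‖ ^ p := by
  refine Continuous.exists_forall_le (by fun_prop) ?_
  rw [← Metric.cobounded_eq_cocompact]
  exact tendsto_sum_mul_norm_sub_pow_cobounded s c w hw hp

end NormSubPow

theorem stmt8_general (N : ℕ) (p : ℕ) (hp1 : 1 ≤ p)
    (nc : ℕ) (c : Fin nc → EuclideanSpace ℝ (Fin N)) (w : Fin nc → ℝ)
    (hw : 0 < ∑ i, w i) :
    BddBelow (Set.range (fun a : EuclideanSpace ℝ (Fin N) => ∑ i, w i * ‖a - c i‖ ^ p)) ∧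
    ∃ aStar : EuclideanSpace ℝ (Fin N), ∀ a : EuclideanSpace ℝ (Fin N),
      (∑ i, w i * ‖aStar - c i‖ ^ p) ≤ ∑ i, w i * ‖a - c i‖ ^ p := by
  obtain ⟨aStar, hmin⟩ :=
    exists_forall_sum_mul_norm_sub_pow_le Finset.univ c w hw (Nat.one_le_iff_ne_zero.mp hp1)
  exact ⟨⟨_, Set.forall_mem_range.2 hmin⟩, aStar, hmin⟩

theorem stmt8 (N : ℕ) (hN : 1 ≤ N) (p : ℕ) (hodd : Odd p) (hp1 : 1 ≤ p)
    (nc : ℕ) (c : Fin nc → EuclideanSpace ℝ (Fin N)) (w : Fin nc → ℝ)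
    (hw : 0 < ∑ i, w i) :
    BddBelow (Set.range (fun a : EuclideanSpace ℝ (Fin N) => ∑ i, w i * ‖a - c i‖ ^ p)) ∧
    ∃ aStar : EuclideanSpace ℝ (Fin N), ∀ a : EuclideanSpace ℝ (Fin N),
      (∑ i, w i * ‖aStar - c i‖ ^ p) ≤ ∑ i, w i * ‖a - c i‖ ^ p :=
  stmt8_general N p hp1 nc c w hw
end

section
/- Let N ≥ 1, let p ≥ 1 be an odd integer, let c¹, …, c^{n_c} ∈ ℝ^N be control points, let w ∈ ℝ^{n_c} satisfy ∑_{i=1}^{n_c} w_i > 0, and let T > 0. Define D^mps(a) = ∑_{i=1}^{n_c} w_i ‖a − c^i‖^p, where ‖·‖ is the Euclidean norm. Then the function a ↦ exp(−D^mps(a)/T) is Lebesgue integrable on ℝ^N: ∫_{ℝ^N} exp(−D^mps(a)/T) da < +∞. -/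
open Real Filter Topology MeasureTheory

/-!
Since `∑ i, w i > 0`, the quotient `D(a) / ‖a‖ ^ p` tends to `∑ i, w i` as `‖a‖ → ∞`, so for
`p ≥ 1` the function `D` eventually dominates `(∑ i, w i) / 2 * ‖a‖`. Hence `exp (-D / T)` is
`O(exp (-b‖a‖))` at infinity, and `exp (-b‖a‖)` is integrable on a finite-dimensional space
because it decays faster than `(1 + ‖a‖) ^ (-r)` for every `r`.
-/

open Bornology Asymptotics

section Cobounded

variable {E : Type*} [SeminormedAddCommGroup E]

theorem tendsto_norm_sub_div_norm_cobounded (c : E) :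
    Tendsto (fun a : E => ‖a - c‖ / ‖a‖) (cobounded E) (𝓝 1) := by
  have hdiff : Tendsto (fun a : E => ‖c‖ / ‖a‖) (cobounded E) (𝓝 0) :=
    tendsto_const_nhds.div_atTop tendsto_norm_cobounded_atTop
  refine tendsto_iff_norm_sub_tendsto_zero.2
    (squeeze_zero' (Eventually.of_forall fun _ => norm_nonneg _) ?_ hdiff)
  filter_upwards [eventually_cobounded_le_norm 1] with a ha
  have ha0 : 0 < ‖a‖ := by linarith
  rw [Real.norm_eq_abs, div_sub_one ha0.ne', abs_div, abs_of_pos ha0]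
  gcongr
  exact abs_norm_sub_norm_le (a - c) a |>.trans_eq (by simp)

variable {ι : Type*} [Fintype ι]

theorem tendsto_sum_mul_norm_sub_pow_div_cobounded (w : ι → ℝ) (c : ι → E) (p : ℕ) :
    Tendsto (fun a : E => (∑ i, w i * ‖a - c i‖ ^ p) / ‖a‖ ^ p) (cobounded E)
      (𝓝 (∑ i, w i)) := by
  have hsum : Tendsto (fun a : E => ∑ i, w i * (‖a - c i‖ / ‖a‖) ^ p) (cobounded E)
      (𝓝 (∑ i, w i * 1 ^ p)) :=
    tendsto_finsetSum _ fun i _ => ((tendsto_norm_sub_div_norm_cobounded (c i)).pow p).const_mul _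
  simp only [one_pow, mul_one] at hsum
  refine hsum.congr fun a => ?_
  simp only [div_pow, Finset.sum_div, mul_div_assoc]

theorem eventually_mul_norm_le_sum_mul_norm_sub_pow {w : ι → ℝ} (c : ι → E) {p : ℕ}
    (hp : 1 ≤ p) (hw : 0 < ∑ i, w i) :
    ∀ᶠ a in cobounded E, (∑ i, w i) / 2 * ‖a‖ ≤ ∑ i, w i * ‖a - c i‖ ^ p := by
  filter_upwards [(tendsto_sum_mul_norm_sub_pow_div_cobounded w c p).eventually
      (eventually_ge_nhds (half_lt_self hw)), eventually_cobounded_le_norm 1] with a hquot ha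
  have hpow : ‖a‖ ≤ ‖a‖ ^ p := le_self_pow₀ ha (by omega)
  rw [le_div_iff₀ (by positivity)] at hquot
  nlinarith

end Cobounded

theorem integrable_exp_neg_mul_norm {E : Type*} [NormedAddCommGroup E] [NormedSpace ℝ E]
    [FiniteDimensional ℝ E] [MeasurableSpace E] [BorelSpace E] (μ : Measure E)
    [μ.IsAddHaarMeasure] {b : ℝ} (hb : 0 < b) :
    Integrable (fun x : E => exp (-(b * ‖x‖))) μ := by
  have hshift : Tendsto (fun x : E => 1 + ‖x‖) (cocompact E) atTop :=
    tendsto_atTop_add_const_left _ 1 tendsto_norm_cocompact_atTop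
  have hO : (fun x : E => exp (-(b * ‖x‖))) =O[cocompact E]
      fun x => (1 + ‖x‖) ^ (-(Module.finrank ℝ E + 1 : ℝ)) := by
    refine (((isLittleO_exp_neg_mul_rpow_atTop hb _).comp_tendsto hshift).isBigO.const_mul_left
      (exp b)).congr_left fun x => ?_
    simp only [Function.comp_apply, ← Real.exp_add]
    ring_nf
  exact (by fun_prop : Continuous fun x : E => exp (-(b * ‖x‖))).locallyIntegrable
    |>.integrable_of_isBigO_cocompact hO
      ((integrable_one_add_norm (lt_add_one _)).integrableAtFilter _)

theorem stmt9_general (N : ℕ) (p : ℕ) (hp1 : 1 ≤ p)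
    (nc : ℕ) (c : Fin nc → EuclideanSpace ℝ (Fin N)) (w : Fin nc → ℝ)
    (hw : 0 < ∑ i, w i) (T : ℝ) (hT : 0 < T) :
    Integrable (fun a : EuclideanSpace ℝ (Fin N) =>
      Real.exp (-((∑ i, w i * ‖a - c i‖ ^ p) / T))) := by
  set b := (∑ i, w i) / 2 / T
  have hbound := eventually_mul_norm_le_sum_mul_norm_sub_pow c hp1 hw
  rw [Metric.cobounded_eq_cocompact] at hbound
  have hO : (fun a : EuclideanSpace ℝ (Fin N) => exp (-((∑ i, w i * ‖a - c i‖ ^ p) / T)))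
      =O[cocompact _] fun a => exp (-(b * ‖a‖)) := by
    refine IsBigO.of_bound 1 (hbound.mono fun a ha => ?_)
    simp only [Real.norm_eq_abs, abs_exp, one_mul, exp_le_exp, neg_le_neg_iff, b]
    rwa [div_mul_eq_mul_div, div_le_div_iff_of_pos_right hT]
  exact (by fun_prop : Continuous _).locallyIntegrable.integrable_of_isBigO_cocompact hO
    ((integrable_exp_neg_mul_norm volume (by positivity)).integrableAtFilter _)

theorem stmt9 (N : ℕ) (hN : 1 ≤ N) (p : ℕ) (hodd : Odd p) (hp1 : 1 ≤ p)
    (nc : ℕ) (c : Fin nc → EuclideanSpace ℝ (Fin N)) (w : Fin nc → ℝ)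
    (hw : 0 < ∑ i, w i) (T : ℝ) (hT : 0 < T) :
    Integrable (fun a : EuclideanSpace ℝ (Fin N) =>
      Real.exp (-((∑ i, w i * ‖a - c i‖ ^ p) / T))) :=
  stmt9_general N p hp1 nc c w hw T hT
end

section
/- Let N ≥ 1, let p ≥ 3 be an odd integer, let c¹, …, c^{n_c} ∈ ℝ^N be control points, let w ∈ ℝ^{n_c} satisfy ∑_{i=1}^{n_c} w_i > 0, and let T > 0. Define D^mps(a) = ∑_{i=1}^{n_c} w_i ‖a − c^i‖^p and G(a) = p ∑_{i=1}^{n_c} w_i (a − c^i) ‖a − c^i‖^{p−2}, where ‖·‖ is the Euclidean norm. Then the function a ↦ ‖G(a)‖ exp(−D^mps(a)/T) is Lebesgue integrable on ℝ^N: ∫_{ℝ^N} ‖G(a)‖ exp(−D^mps(a)/T) da < +∞. -/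
/-! Since `‖a - c‖ ~ ‖a‖` at infinity, the potential `∑ wᵢ ‖a - cᵢ‖ ^ p` is
`(∑ wᵢ) ‖a‖ ^ p + o(‖a‖ ^ p)` and the gradient is `O(‖a‖ ^ (p - 1))`. With `∑ wᵢ > 0` the
integrand is therefore `O(‖a‖ ^ (p - 1) * exp (-b ‖a‖))` for some `b > 0`, which decays faster
than the integrable `(1 + ‖a‖) ^ (-(N + 1))`. -/

open Real Filter Topology MeasureTheory Asymptotics Module

theorem isBigO_rpow_mul_exp_neg_one_add_rpow_neg {b : ℝ} (hb : 0 < b) (k : ℝ) {r : ℝ}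
    (hr : 0 ≤ r) :
    (fun x : ℝ => x ^ k * exp (-b * x)) =O[atTop] fun x => (1 + x) ^ (-r) := by
  have h_rpow : (fun x : ℝ => x ^ k * exp (-b * x)) =O[atTop] fun x => x ^ (-r) := by
    refine ((isBigO_refl (fun x : ℝ => x ^ k) atTop).mul
      (isLittleO_exp_neg_mul_rpow_atTop hb (-(k + r))).isBigO).trans_eventuallyEq ?_
    filter_upwards [eventually_gt_atTop 0] with x hx
    rw [← rpow_add hx]
    ring_nf
  refine h_rpow.trans (IsBigO.of_bound (2 ^ r) ?_)
  filter_upwards [eventually_ge_atTop 1] with x hx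
  have hx0 : 0 < x := by linarith
  rw [norm_of_nonneg (by positivity), norm_of_nonneg (by positivity)]
  calc x ^ (-r) = 2 ^ r * (2 * x) ^ (-r) := by
        rw [mul_rpow zero_le_two hx0.le, rpow_neg zero_le_two, ← mul_assoc,
          mul_inv_cancel₀ (by positivity), one_mul]
    _ ≤ 2 ^ r * (1 + x) ^ (-r) :=
        mul_le_mul_of_nonneg_left
          (rpow_le_rpow_of_nonpos (by positivity) (by linarith) (by linarith)) (by positivity)

theorem MeasureTheory.LocallyIntegrable.integrable_of_isBigO_rpow_mul_exp_neg_norm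
    {E F : Type*} [NormedAddCommGroup E] [NormedSpace ℝ E] [FiniteDimensional ℝ E]
    [MeasurableSpace E] [BorelSpace E] {μ : Measure E} [μ.IsAddHaarMeasure]
    [NormedAddCommGroup F] {f : E → F} (hf : LocallyIntegrable f μ) {b : ℝ} (hb : 0 < b) (k : ℝ)
    (hfk : f =O[cocompact E] fun a => ‖a‖ ^ k * exp (-b * ‖a‖)) : Integrable f μ := by
  refine hf.integrable_of_isBigO_cocompact (hfk.trans ?_)
    ((integrable_one_add_norm (lt_add_one (finrank ℝ E : ℝ))).integrableAtFilter _)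
  exact (isBigO_rpow_mul_exp_neg_one_add_rpow_neg hb k (by positivity)).comp_tendsto
    tendsto_norm_cocompact_atTop

section ShiftedNorms

variable {E ι : Type*} [NormedAddCommGroup E] [ProperSpace E]

theorem isEquivalent_norm_sub_cocompact (c : E) :
    (fun a => ‖a - c‖) ~[cocompact E] fun a => ‖a‖ := by
  refine IsBigO.trans_isLittleO (g := fun _ => (1 : ℝ)) (IsBigO.of_bound ‖c‖ ?_)
    ((isLittleO_one_left_iff ℝ).2 (by simpa using tendsto_norm_cocompact_atTop))
  filter_upwards with a
  simpa using abs_norm_sub_norm_le (a - c) a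

theorem isLittleO_sum_mul_norm_sub_pow_sub [Fintype ι] (w : ι → ℝ) (c : ι → E) (n : ℕ) :
    (fun a => ∑ i, w i * ‖a - c i‖ ^ n - (∑ i, w i) * ‖a‖ ^ n) =o[cocompact E]
      fun a => ‖a‖ ^ n := by
  have h_term (i : ι) : (fun a => w i * (‖a - c i‖ ^ n - ‖a‖ ^ n)) =o[cocompact E]
      fun a => ‖a‖ ^ n :=
    ((isEquivalent_norm_sub_cocompact (c i)).pow n).isLittleO.const_mul_left (w i)
  refine (IsLittleO.sum (s := Finset.univ) fun i _ => h_term i).congr_left fun a => ?_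
  simp [Finset.sum_mul, mul_sub]

theorem eventually_half_sum_mul_norm_pow_le [Fintype ι] {w : ι → ℝ} (hw : 0 < ∑ i, w i)
    (c : ι → E) (n : ℕ) :
    ∀ᶠ a in cocompact E, (∑ i, w i) / 2 * ‖a‖ ^ n ≤ ∑ i, w i * ‖a - c i‖ ^ n := by
  filter_upwards [(isLittleO_sum_mul_norm_sub_pow_sub w c n).def (half_pos hw)] with a ha
  rw [norm_pow, norm_norm, norm_eq_abs] at ha
  linarith [neg_abs_le (∑ i, w i * ‖a - c i‖ ^ n - (∑ i, w i) * ‖a‖ ^ n)]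

theorem isBigO_sum_mul_norm_sub_pow_smul_sub [NormedSpace ℝ E] [Fintype ι] (w : ι → ℝ)
    (c : ι → E) (m : ℕ) :
    (fun a => ∑ i, (w i * ‖a - c i‖ ^ m) • (a - c i)) =O[cocompact E]
      fun a => ‖a‖ ^ (m + 1) := by
  have h_term (i : ι) : (fun a => (w i * ‖a - c i‖ ^ m) • (a - c i)) =O[cocompact E]
      fun a => ‖a‖ ^ (m + 1) := by
    refine IsBigO.of_norm_left <| (((isEquivalent_norm_sub_cocompact (c i)).pow
      (m + 1)).isBigO.const_mul_left |w i|).congr_left fun a => ?_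
    simp [norm_smul, pow_succ, mul_assoc]
  exact (IsBigO.sum (s := Finset.univ) fun i _ => h_term i).congr_left fun a => by simp

end ShiftedNorms

theorem stmt10_general (N : ℕ) (p : ℕ) (hp3 : 3 ≤ p)
    (nc : ℕ) (c : Fin nc → EuclideanSpace ℝ (Fin N)) (w : Fin nc → ℝ)
    (hw : 0 < ∑ i, w i) (T : ℝ) (hT : 0 < T) :
    Integrable (fun a : EuclideanSpace ℝ (Fin N) =>
      ‖(p : ℝ) • ∑ i, (w i * ‖a - c i‖ ^ (p - 2)) • (a - c i)‖ *
        Real.exp (-((∑ i, w i * ‖a - c i‖ ^ p) / T))) := by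
  set b := (∑ i, w i) / 2 / T
  have hb : 0 < b := by positivity
  have h_grad : (fun a => ‖(p : ℝ) • ∑ i, (w i * ‖a - c i‖ ^ (p - 2)) • (a - c i)‖)
      =O[cocompact _] fun a => ‖a‖ ^ (p - 2 + 1) :=
    ((isBigO_sum_mul_norm_sub_pow_smul_sub w c (p - 2)).const_smul_left (p : ℝ)).norm_left
  have h_gibbs : (fun a => exp (-((∑ i, w i * ‖a - c i‖ ^ p) / T))) =O[cocompact _]
      fun a : EuclideanSpace ℝ (Fin N) => exp (-b * ‖a‖) := by
    refine IsBigO.of_bound 1 ?_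
    filter_upwards [eventually_half_sum_mul_norm_pow_le hw c p,
      tendsto_norm_cocompact_atTop.eventually_ge_atTop 1] with a h_pot h_one
    have h_pow : ‖a‖ ≤ ‖a‖ ^ p := le_self_pow₀ h_one (by omega)
    have h_bT : b * T = (∑ i, w i) / 2 := div_mul_cancel₀ _ hT.ne'
    have h_exponent : b * ‖a‖ ≤ (∑ i, w i * ‖a - c i‖ ^ p) / T := by
      rw [le_div_iff₀ hT]
      nlinarith [mul_le_mul_of_nonneg_left h_pow (half_pos hw).le]
    simpa using h_exponent
  refine (Continuous.locallyIntegrable (by fun_prop)).integrable_of_isBigO_rpow_mul_exp_neg_norm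
    hb ((p - 2 + 1 : ℕ) : ℝ) ?_
  simpa only [rpow_natCast] using h_grad.mul h_gibbs

theorem stmt10 (N : ℕ) (hN : 1 ≤ N) (p : ℕ) (hodd : Odd p) (hp3 : 3 ≤ p)
    (nc : ℕ) (c : Fin nc → EuclideanSpace ℝ (Fin N)) (w : Fin nc → ℝ)
    (hw : 0 < ∑ i, w i) (T : ℝ) (hT : 0 < T) :
    Integrable (fun a : EuclideanSpace ℝ (Fin N) =>
      ‖(p : ℝ) • ∑ i, (w i * ‖a - c i‖ ^ (p - 2)) • (a - c i)‖ *
        Real.exp (-((∑ i, w i * ‖a - c i‖ ^ p) / T))) :=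
  stmt10_general N p hp3 nc c w hw T hT
end
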